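/- Let p, q be idempotents in a ring R with p − q Drazin invertible and (p+q)(1 − (p−q)(p−q)^D) nilpotent. Then p + q is Drazin invertible and (p+q)^D = (p−q)^D (p+q) (p−q)^D. -/

import Mathlib

/-!
Write `s = p + q` and `a = p - q`. Idempotency of `p` and `q` gives `s² + a² = 2s` and
`sa + as = 2a`. The first relation makes `s` commute with `a²`, hence with `d²`, which is the
Drazin inverse of `a²`. Then `dsd = 2d² - sd²`, and the second relation yields
`s(dsd) = (dsd)s = ad`; the remaining conditions reduce to `dad = d` and to the nilpotency of
`s(1 - ad)`.
-/

/-- `b` is the Drazin inverse of `a`. -/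
def IsDrazinInverse {R : Type*} [Ring R] (a b : R) : Prop :=
  a * b = b * a ∧ b * a * b = b ∧ IsNilpotent (a - a * a * b)

namespace IsDrazinInverse

variable {R : Type*} [Ring R] {a b : R}

theorem commute (h : IsDrazinInverse a b) : Commute a b := h.1

theorem exists_pow_succ_mul_eq (h : IsDrazinInverse a b) : ∃ k : ℕ, a ^ (k + 1) * b = a ^ k := by
  obtain ⟨m, hm⟩ := h.2.2
  have hab : IsIdempotentElem (a * b) := by
    rw [IsIdempotentElem]; linear_combination (norm := noncomm_ring) a * h.2.1
  have hcomm : Commute a (1 - a * b) :=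
    (Commute.one_right a).sub_right ((Commute.refl a).mul_right h.commute)
  have hzero : a ^ (m + 1) * (1 - a * b) = 0 := by
    rw [← hab.one_sub.pow_succ_eq m, ← hcomm.mul_pow, mul_sub, mul_one, ← mul_assoc, pow_succ,
      hm, zero_mul]
  refine ⟨m + 1, ?_⟩
  rw [mul_sub, mul_one, ← mul_assoc, ← pow_succ, sub_eq_zero] at hzero
  exact hzero.symm

theorem pow_mul_pow_succ (h : IsDrazinInverse a b) (k : ℕ) : a ^ k * b ^ (k + 1) = b := by
  induction k with
  | zero => simp
  | succ k ih =>
    calc a ^ (k + 1) * b ^ (k + 1 + 1) = a ^ k * (a * b ^ (k + 1)) * b := by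
          rw [pow_succ a, pow_succ b (k + 1)]; simp only [mul_assoc]
      _ = (a ^ k * b ^ (k + 1)) * a * b := by
          rw [(h.commute.pow_right (k + 1)).eq]; simp only [mul_assoc]
      _ = b := by rw [ih, h.2.1]

theorem commute_of_commute (h : IsDrazinInverse a b) {x : R} (hx : Commute x a) :
    Commute x b := by
  -- Moving `x` across `a ^ k = b * a ^ (k + 1)` and `b = a ^ k * b ^ (k + 1)` gives
  -- `x * b = b * x * a * b` and `b * x = b * a * x * b`, which agree as `x * a = a * x`.
  obtain ⟨k, hk⟩ := h.exists_pow_succ_mul_eq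
  have hb := h.pow_mul_pow_succ k
  have hk' : b * a ^ (k + 1) = a ^ k := by rw [← (h.commute.pow_left (k + 1)).eq, hk]
  have hb' : b ^ (k + 1) * a ^ k = b := by rw [← (h.commute.pow_pow k (k + 1)).eq, hb]
  have hxb : x * b = b * x * a * b :=
    calc x * b = x * a ^ k * b ^ (k + 1) := by rw [mul_assoc, hb]
      _ = b * (a ^ (k + 1) * x) * b ^ (k + 1) := by
          rw [(hx.pow_right k).eq, ← hk']; simp only [mul_assoc]
      _ = b * x * a * (a ^ k * b ^ (k + 1)) := by
          rw [← (hx.pow_right (k + 1)).eq, pow_succ']; simp only [mul_assoc]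
      _ = b * x * a * b := by rw [hb]
  have hbx : b * x = b * a * x * b :=
    calc b * x = b ^ (k + 1) * (x * a ^ k) := by
          rw [(hx.pow_right k).eq, ← mul_assoc, hb']
      _ = b ^ (k + 1) * (x * a ^ (k + 1)) * b := by rw [← hk]; simp only [mul_assoc]
      _ = (b ^ (k + 1) * a ^ k) * a * x * b := by
          rw [(hx.pow_right (k + 1)).eq, pow_succ a k]; simp only [mul_assoc]
      _ = b * a * x * b := by rw [hb']
  calc x * b = b * (x * a) * b := by rw [hxb]; simp only [mul_assoc]
    _ = b * x := by rw [hx.eq, hbx]; simp only [mul_assoc]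

theorem mul_self (h : IsDrazinInverse a b) : IsDrazinInverse (a * a) (b * b) := by
  have hc : Commute (a * a) b := h.commute.mul_left h.commute
  refine ⟨(hc.mul_right hc).eq, ?_, ?_⟩
  · calc b * b * (a * a) * (b * b) = b * a * b * a * b * b := by
          rw [mul_assoc b a b, h.1]; simp only [mul_assoc]
      _ = b * b := by rw [h.2.1, h.2.1]
  · have : a * a - a * a * (a * a) * (b * b) = a * (a - a * a * b) := by
      calc a * a - a * a * (a * a) * (b * b) = a * a - a * a * a * (b * a * b) := by
            rw [← h.1]; simp only [mul_assoc]
        _ = a * (a - a * a * b) := by rw [h.2.1]; noncomm_ring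
    rw [this]
    have hcomm : Commute a (a - a * a * b) :=
      (Commute.refl a).sub_right (((Commute.refl a).mul_right (Commute.refl a)).mul_right h.commute)
    exact hcomm.isNilpotent_mul_left h.2.2

theorem mul_mul_of_sq_add_sq {s d : R} (h : IsDrazinInverse a d) (hs : s * s + a * a = s + s)
    (hsa : s * a + a * s = a + a) (hn : IsNilpotent (s * (1 - a * d))) :
    IsDrazinInverse s (d * s * d) := by
  have hsa2 : Commute s (a * a) := by
    unfold Commute SemiconjBy; linear_combination (norm := noncomm_ring) s * hs - hs * s
  have hsd2 : s * (d * d) = d * d * s := h.mul_self.commute_of_commute hsa2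
  have hadd : a * (d * d) = d := by rw [← mul_assoc, h.1, h.2.1]
  -- `d s d = a d² s d = a s d³ = (2a - s a) d³`, and `a d³ = d²`.
  have hdsd : d * s * d = d * d + d * d - s * (d * d) := by
    linear_combination (norm := noncomm_ring)
      -(hadd * s * d) - a * hsd2 * d + hsa * (d * d * d) + 2 * (hadd * d) - s * hadd * d
  have hs_dsd : s * (d * s * d) = a * d := by
    linear_combination (norm := noncomm_ring) s * hdsd - hs * (d * d) + a * hadd
  have hdsd_s : d * s * d * s = a * d := by
    linear_combination (norm := noncomm_ring)
      hdsd * s - 2 * hsd2 + s * hsd2 + hs_dsd - s * hdsd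
  refine ⟨hs_dsd.trans hdsd_s.symm, ?_, ?_⟩
  · rw [mul_assoc _ s, hs_dsd]
    linear_combination (norm := noncomm_ring) d * s * h.2.1
  · convert hn using 1
    rw [mul_assoc, hs_dsd, mul_sub, mul_one]

end IsDrazinInverse

theorem stmt16 {R : Type*} [Ring R] (p q d : R) (hp : p * p = p) (hq : q * q = q)
    (hd : IsDrazinInverse (p - q) d)
    (hn : IsNilpotent ((p + q) * (1 - (p - q) * d))) :
    IsDrazinInverse (p + q) (d * (p + q) * d) :=
  hd.mul_mul_of_sq_add_sq
    (by linear_combination (norm := noncomm_ring) 2 * hp + 2 * hq)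
    (by linear_combination (norm := noncomm_ring) 2 * hp - 2 * hq) hn
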